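/- arXiv:1602.07359 — 2 statements merged into one kernel-verified Lean document; each statement's English description precedes it below -/
import Mathlib

section
/- Let T be a (nondegenerate) triangle in ℝ² with vertices a₁, a₂, a₃, edges σ₁, σ₂, σ₃ (σᵢ opposite to aᵢ), circumcenter c_T, area |T|, edge lengths |σᵢ|, and outward unit normals n_{T,σᵢ}. Then |T|·c_T = Σᵢ |σᵢ| · ((|v₁^{σᵢ}|² + |v₂^{σᵢ}|²)/4) · n_{T,σᵢ}, where v₁^{σ}, v₂^{σ} denote the two endpoints of the edge σ. -/
open MeasureTheory Pointwise

/-!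
The outward unit normal of the edge from `p` to `q` is `ε J (q - p) / |q - p|`, where `J` is the
clockwise rotation by a right angle and `ε = ±1` is the orientation of the triangle. Hence the
right-hand side is `(ε / 4) Σ (|p|² + |q|²) J (q - p)`. Equidistance from the vertices gives
`|aᵢ|² = k + 2 ⟪aᵢ, c⟫` with `k` independent of `i`; the constant `k` drops out because the
edge vectors sum to zero, and `Σ ⟪p + q, c⟫ J (q - p) = D c` with `D` twice the signed area
(the discrete Gauss–Green formula for the linear function `⟪·, c⟫`). As `ε D = 2 |T|`, both
sides agree.
-/

def stdTriangle : Set (ℝ × ℝ) := {p | 0 ≤ p.1 ∧ 0 ≤ p.2 ∧ p.1 + p.2 ≤ 1}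

lemma measurableSet_stdTriangle : MeasurableSet stdTriangle :=
  (measurableSet_le measurable_const measurable_fst).inter
    ((measurableSet_le measurable_const measurable_snd).inter
      (measurableSet_le (measurable_fst.add measurable_snd) measurable_const))

lemma volume_stdTriangle : volume stdTriangle = ENNReal.ofReal (1 / 2) := by
  have hslice (x : ℝ) : volume (Prod.mk x ⁻¹' stdTriangle) =
      (Set.Icc 0 1).indicator (fun x ↦ ENNReal.ofReal (1 - x)) x := by
    by_cases hx : 0 ≤ x
    · have : Prod.mk x ⁻¹' stdTriangle = Set.Icc 0 (1 - x) := by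
        ext y
        simp only [stdTriangle, Set.mem_preimage, Set.mem_ofPred_eq, Set.mem_Icc, hx, true_and,
          le_sub_iff_add_le']
      rw [this, Real.volume_Icc, sub_zero, Set.indicator_apply]
      split_ifs with h
      · rfl
      · exact ENNReal.ofReal_of_nonpos (by simp_all; linarith)
    · have : Prod.mk x ⁻¹' stdTriangle = ∅ := by
        ext y; simp [stdTriangle, hx]
      simp [this, hx]
  rw [Measure.volume_eq_prod, Measure.prod_apply measurableSet_stdTriangle]
  simp_rw [hslice]
  rw [lintegral_indicator measurableSet_Icc, ← ofReal_integral_eq_lintegral_ofReal,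
    integral_Icc_eq_integral_Ioc, ← intervalIntegral.integral_of_le zero_le_one]
  · rw [intervalIntegral.integral_comp_sub_left (fun x ↦ x), integral_id]; norm_num
  · exact (continuous_const.sub continuous_id).integrableOn_Icc
  · filter_upwards [ae_restrict_mem measurableSet_Icc] with x hx
    simp [hx.2]

local notation "E2" => EuclideanSpace ℝ (Fin 2)

namespace EuclideanSpace

def cross (x y : E2) : ℝ := x 0 * y 1 - x 1 * y 0

noncomputable def rotCW : E2 →ₗ[ℝ] E2 where
  toFun x := !₂[x 1, -x 0]
  map_add' x y := by ext i; fin_cases i <;> simp; ring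
  map_smul' r x := by ext i; fin_cases i <;> simp

@[simp] lemma rotCW_apply_zero (x : E2) : rotCW x 0 = x 1 := rfl

@[simp] lemma rotCW_apply_one (x : E2) : rotCW x 1 = -x 0 := rfl

lemma inner_eq_fin_two (x y : E2) : inner ℝ x y = x 0 * y 0 + x 1 * y 1 := by
  simp [PiLp.inner_apply, Fin.sum_univ_two]; ring

lemma norm_sq_eq_fin_two (x : E2) : ‖x‖ ^ 2 = x 0 ^ 2 + x 1 ^ 2 := by
  simp [EuclideanSpace.norm_sq_eq, Fin.sum_univ_two]

lemma norm_rotCW (x : E2) : ‖rotCW x‖ = ‖x‖ := by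
  rw [← sq_eq_sq₀ (norm_nonneg _) (norm_nonneg _), norm_sq_eq_fin_two, norm_sq_eq_fin_two]
  simp; ring

lemma inner_rotCW_left (x y : E2) : inner ℝ (rotCW x) y = -cross x y := by
  simp [inner_eq_fin_two, cross]; ring

lemma norm_sq_smul_eq_inner_smul_add_inner_rotCW_smul (n e : E2) :
    ‖e‖ ^ 2 • n = inner ℝ n e • e + inner ℝ n (rotCW e) • rotCW e := by
  ext i; fin_cases i <;> simp [norm_sq_eq_fin_two, inner_eq_fin_two] <;> ring

lemma norm_smul_eq_sign_cross_smul_rotCW {n e u : E2} (hn : ‖n‖ = 1)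
    (hne : inner ℝ n e = 0) (hnu : inner ℝ n u < 0) :
    ‖e‖ • n = (SignType.sign (cross e u) : ℝ) • rotCW e := by
  rcases eq_or_ne e 0 with rfl | he
  · simp
  set s := inner ℝ n (rotCW e)
  have hdecomp : ‖e‖ ^ 2 • n = s • rotCW e := by
    simpa [hne] using norm_sq_smul_eq_inner_smul_add_inner_rotCW_smul n e
  have hpos : 0 < ‖e‖ := norm_pos_iff.mpr he
  have habs : |s| = ‖e‖ := by
    have := congrArg norm hdecomp
    rw [norm_smul, norm_smul, hn, norm_rotCW, Real.norm_eq_abs, Real.norm_eq_abs,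
      abs_of_nonneg (by positivity)] at this
    nlinarith
  have hsign : 0 < s * cross e u := by
    have := congrArg (inner ℝ · u) hdecomp
    simp only [inner_smul_left, inner_rotCW_left, RCLike.conj_to_real] at this
    nlinarith [pow_pos hpos 2]
  have hs : s = SignType.sign (cross e u) * ‖e‖ := by
    rcases lt_trichotomy (cross e u) 0 with h | h | h
    · rw [sign_neg h, ← habs, abs_of_neg (by nlinarith)]; simp
    · simp [h] at hsign
    · rw [sign_pos h, ← habs, abs_of_pos (by nlinarith)]; simp
  rw [hs, mul_comm, ← smul_smul, pow_two, ← smul_smul] at hdecomp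
  exact smul_right_injective _ hpos.ne' hdecomp

lemma cross_sub_cyclic (a : Fin 3 → E2) (i : Fin 3) :
    cross (a (i + 2) - a (i + 1)) (a i - a (i + 1)) = cross (a 1 - a 0) (a 2 - a 0) := by
  fin_cases i <;> simp [cross] <;> ring

lemma sum_rotCW_sub (a : Fin 3 → E2) : ∑ i, rotCW (a (i + 2) - a (i + 1)) = 0 := by
  simp only [Fin.sum_univ_three, ← map_add]
  convert map_zero rotCW using 2
  simp

lemma sum_inner_add_smul_rotCW (a : Fin 3 → E2) (c : E2) :
    ∑ i, inner ℝ (a (i + 1) + a (i + 2)) c • rotCW (a (i + 2) - a (i + 1)) =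
      cross (a 1 - a 0) (a 2 - a 0) • c := by
  ext j; fin_cases j <;> simp [Fin.sum_univ_three, inner_eq_fin_two, cross] <;> ring

lemma norm_sq_sub_two_inner_eq_of_dist_eq {c x y : E2} (h : dist c x = dist c y) :
    ‖x‖ ^ 2 - 2 * inner ℝ x c = ‖y‖ ^ 2 - 2 * inner ℝ y c := by
  rw [dist_comm c, dist_comm c, dist_eq_norm, dist_eq_norm] at h
  have := congrArg (· ^ 2) h
  simp only [norm_sub_sq_real] at this
  linarith

lemma sum_norm_sq_add_smul_rotCW {a : Fin 3 → E2} {c : E2}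
    (hc01 : dist c (a 0) = dist c (a 1)) (hc12 : dist c (a 1) = dist c (a 2)) :
    ∑ i, (‖a (i + 1)‖ ^ 2 + ‖a (i + 2)‖ ^ 2) • rotCW (a (i + 2) - a (i + 1)) =
      (2 * cross (a 1 - a 0) (a 2 - a 0)) • c := by
  set k := ‖a 0‖ ^ 2 - 2 * inner ℝ (a 0) c
  have hk (i : Fin 3) : ‖a i‖ ^ 2 = k + 2 * inner ℝ (a i) c := by
    have h01 := norm_sq_sub_two_inner_eq_of_dist_eq hc01
    have h12 := norm_sq_sub_two_inner_eq_of_dist_eq hc12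
    fin_cases i <;> simp <;> linarith
  calc ∑ i, (‖a (i + 1)‖ ^ 2 + ‖a (i + 2)‖ ^ 2) • rotCW (a (i + 2) - a (i + 1))
      = ∑ i, ((2 * k) • rotCW (a (i + 2) - a (i + 1)) +
          (2 : ℝ) • (inner ℝ (a (i + 1) + a (i + 2)) c •
            rotCW (a (i + 2) - a (i + 1)))) := by
        refine Finset.sum_congr rfl fun i _ ↦ ?_
        rw [hk, hk, inner_add_left]
        module
    _ = (2 * cross (a 1 - a 0) (a 2 - a 0)) • c := by
        rw [Finset.sum_add_distrib, ← Finset.smul_sum, ← Finset.smul_sum, sum_rotCW_sub,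
          sum_inner_add_smul_rotCW, smul_zero, zero_add, smul_smul]

lemma convexHull_zero_single_single :
    convexHull ℝ {0, EuclideanSpace.single 0 1, EuclideanSpace.single 1 1} =
      (fun x : E2 ↦ (x 0, x 1)) ⁻¹' stdTriangle := by
  apply subset_antisymm
  · refine convexHull_min ?_ ?_
    · rintro x (rfl | rfl | rfl) <;> simp [stdTriangle]
    · rintro x ⟨hx0, hx1, hx⟩ y ⟨hy0, hy1, hy⟩ s t hs ht hst
      simp only [stdTriangle, Set.mem_preimage, Set.mem_ofPred_eq, PiLp.add_apply,
        PiLp.smul_apply, smul_eq_mul]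
      refine ⟨by positivity, by positivity, ?_⟩
      nlinarith
  · rintro x ⟨hx0, hx1, hx⟩
    have hw : ∑ i, ![1 - x 0 - x 1, x 0, x 1] i = 1 := by simp [Fin.sum_univ_three]; ring
    convert (convex_convexHull ℝ
        ({0, EuclideanSpace.single 0 1, EuclideanSpace.single 1 1} : Set E2)).sum_mem
      (t := Finset.univ) (z := ![0, EuclideanSpace.single 0 1, EuclideanSpace.single 1 1])
      (fun i _ ↦ by fin_cases i <;> simp <;> linarith) hw
      (fun i _ ↦ subset_convexHull ℝ _ (by fin_cases i <;> simp)) using 1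
    ext j; fin_cases j <;> simp [Fin.sum_univ_three]

lemma volume_convexHull_zero_single_single :
    volume (convexHull ℝ {0, EuclideanSpace.single 0 1, EuclideanSpace.single 1 1} : Set E2) =
      ENNReal.ofReal (1 / 2) := by
  rw [convexHull_zero_single_single, ← volume_stdTriangle]
  exact ((volume_preserving_finTwoArrow ℝ).comp
    (PiLp.volume_preserving_ofLp (Fin 2))).measure_preimage
      measurableSet_stdTriangle.nullMeasurableSet

lemma volume_convexHull_triangle (a : Fin 3 → E2) :
    (volume (convexHull ℝ (Set.range a))).toReal = |cross (a 1 - a 0) (a 2 - a 0)| / 2 := by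
  set b₁ := a 1 - a 0
  set b₂ := a 2 - a 0
  let B := (EuclideanSpace.basisFun (Fin 2) ℝ).toBasis
  let L := Matrix.toLin B B !![b₁ 0, b₂ 0; b₁ 1, b₂ 1]
  have hL (j : Fin 2) : L (EuclideanSpace.single j 1) = ![b₁, b₂] j := by
    have := Matrix.toLin_self (v₁ := B) (v₂ := B) !![b₁ 0, b₂ 0; b₁ 1, b₂ 1] j
    simp only [B, OrthonormalBasis.coe_toBasis, EuclideanSpace.basisFun_apply] at this
    rw [this]
    ext i; fin_cases i <;> fin_cases j <;> simp
  have hdet : LinearMap.det L = cross b₁ b₂ := by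
    simp [L, LinearMap.det_toLin, Matrix.det_fin_two, cross]; ring
  have hrange :
      Set.range a = a 0 +ᵥ L '' {0, EuclideanSpace.single 0 1, EuclideanSpace.single 1 1} := by
    rw [Set.image_insert_eq, Set.image_insert_eq, Set.image_singleton, map_zero, hL 0, hL 1]
    ext x
    simp [Set.vadd_set_insert, b₁, b₂, Fin.exists_fin_succ, eq_comm]
  rw [hrange, convexHull_vadd, measure_vadd, ← LinearMap.image_convexHull,
    Measure.addHaar_image_linearMap, volume_convexHull_zero_single_single, hdet,
    ← ENNReal.ofReal_mul (abs_nonneg _), ENNReal.toReal_ofReal (by positivity)]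
  ring

end EuclideanSpace

open EuclideanSpace

theorem stmt0_general (a : Fin 3 → EuclideanSpace ℝ (Fin 2))
    (n : Fin 3 → EuclideanSpace ℝ (Fin 2))
    (hunit : ∀ i, ‖n i‖ = 1)
    (horth : ∀ i, (inner ℝ (n i) (a (i + 2) - a (i + 1)) : ℝ) = 0)
    (hout : ∀ i, (inner ℝ (n i) (a i - a (i + 1)) : ℝ) < 0)
    (c : EuclideanSpace ℝ (Fin 2))
    (hc01 : dist c (a 0) = dist c (a 1))
    (hc12 : dist c (a 1) = dist c (a 2)) :
    (volume (convexHull ℝ (Set.range a))).toReal • c =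
      ∑ i, (dist (a (i + 1)) (a (i + 2)) *
        ((‖a (i + 1)‖ ^ 2 + ‖a (i + 2)‖ ^ 2) / 4)) • n i := by
  set D := cross (a 1 - a 0) (a 2 - a 0)
  have hnormal (i : Fin 3) :
      dist (a (i + 1)) (a (i + 2)) • n i =
        (SignType.sign D : ℝ) • rotCW (a (i + 2) - a (i + 1)) := by
    have := norm_smul_eq_sign_cross_smul_rotCW (hunit i) (horth i) (hout i)
    rwa [cross_sub_cyclic, ← dist_eq_norm, dist_comm] at this
  calc (volume (convexHull ℝ (Set.range a))).toReal • c
      = ((SignType.sign D : ℝ) / 4) • (2 * D) • c := by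
        rw [volume_convexHull_triangle, smul_smul, ← sign_mul_self]
        change ((SignType.sign D : ℝ) * D / 2) • c = _
        ring_nf
    _ = ∑ i, (dist (a (i + 1)) (a (i + 2)) *
          ((‖a (i + 1)‖ ^ 2 + ‖a (i + 2)‖ ^ 2) / 4)) • n i := by
        rw [← sum_norm_sq_add_smul_rotCW hc01 hc12, Finset.smul_sum]
        refine Finset.sum_congr rfl fun i _ ↦ ?_
        rw [mul_comm, ← smul_smul, hnormal, smul_smul, smul_smul]
        ring_nf

/-- for a nondegenerate triangle `T = conv{a 0, a 1, a 2} ⊂ ℝ²`, with edge `σᵢ`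
(opposite vertex `a i`) of endpoints `a (i+1)`, `a (i+2)`, length `dist (a (i+1)) (a (i+2))`,
outward unit normal `n i`, and circumcenter `c` (equidistant from the three vertices),
`|T| • c = Σᵢ |σᵢ| ((|v₁^{σᵢ}|² + |v₂^{σᵢ}|²)/4) • n i`. -/
theorem stmt0 (a : Fin 3 → EuclideanSpace ℝ (Fin 2))
    (ha : AffineIndependent ℝ a)
    (n : Fin 3 → EuclideanSpace ℝ (Fin 2))
    (hunit : ∀ i, ‖n i‖ = 1)
    (horth : ∀ i, (inner ℝ (n i) (a (i + 2) - a (i + 1)) : ℝ) = 0)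
    (hout : ∀ i, (inner ℝ (n i) (a i - a (i + 1)) : ℝ) < 0)
    (c : EuclideanSpace ℝ (Fin 2))
    (hc01 : dist c (a 0) = dist c (a 1))
    (hc12 : dist c (a 1) = dist c (a 2)) :
    (volume (convexHull ℝ (Set.range a))).toReal • c =
      ∑ i, (dist (a (i + 1)) (a (i + 2)) *
        ((‖a (i + 1)‖ ^ 2 + ‖a (i + 2)‖ ^ 2) / 4)) • n i :=
  stmt0_general a n hunit horth hout c hc01 hc12
end

section
/- Let U, V, O be open subsets of ℝ^d such that for all x ∈ U and y ∈ V, the segment [x, y] is contained in O. Then there exists a constant C depending only on d such that for every φ ∈ W^{1,1}(O), |⨍_U φ − ⨍_V φ| ≤ C · diam(O)^{d+1} / (|U|·|V|) · ∫_O |∇φ(x)| dx, where ⨍ denotes the average integral. -/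
/-!
For `x ∈ U`, `y ∈ V` the fundamental theorem of calculus along the segment gives
`|φ x - φ y| ≤ diam O · ∫₀¹ |∇φ| ((1 - t) x + t y) dt`, so `|U| |V| · |⨍_U φ - ⨍_V φ|` is at most
`diam O` times the triple integral of `|∇φ|` over `U × V × [0, 1]`. For fixed `t ≥ 1/2` the
substitution `y ↦ (1 - t) x + t y` has Jacobian `t ^ d ≥ 2 ^ (-d)`, so the integral in `y` is at
most `2 ^ d ∫_O |∇φ|`; for `t ≤ 1/2` the same holds for the integral in `x`. Hence the triple
integral is at most `2 ^ d (|U| + |V|) ∫_O |∇φ|`, and `|U|, |V| ≤ |B(0, 1)| diam(O) ^ d`.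
-/

open MeasureTheory Metric Set AffineMap Module
open scoped ENNReal

theorem enorm_sub_le_lintegral_enorm_deriv {F : Type*} [NormedAddCommGroup F] [NormedSpace ℝ F]
    [CompleteSpace F] {f : ℝ → F} {a b : ℝ} (hab : a ≤ b)
    (hf : ∀ t ∈ Icc a b, DifferentiableAt ℝ f t) :
    ‖f b - f a‖ₑ ≤ ∫⁻ t in Icc a b, ‖deriv f t‖ₑ := by
  by_cases hfin : ∫⁻ t in Icc a b, ‖deriv f t‖ₑ = ∞
  · simp [hfin]
  have hint : IntegrableOn (deriv f) (Icc a b) :=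
    ⟨aestronglyMeasurable_deriv f _, Ne.lt_top hfin⟩
  rw [← intervalIntegral.integral_eq_sub_of_hasDerivAt
    (fun t ht => (hf t (uIcc_of_le hab ▸ ht)).hasDerivAt)
    ((intervalIntegrable_iff_integrableOn_Icc_of_le hab).2 hint),
    intervalIntegral.integral_of_le hab, ← integral_Icc_eq_integral_Ioc]
  exact enorm_integral_le_lintegral_enorm _

theorem norm_gradient_eq_norm_fderiv {E : Type*} [NormedAddCommGroup E] [InnerProductSpace ℝ E]
    [CompleteSpace E] (f : E → ℝ) (x : E) : ‖gradient f x‖ = ‖fderiv ℝ f x‖ :=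
  (InnerProductSpace.toDual ℝ E).symm.norm_map _

theorem setAverage_sub_setAverage_eq_div {α : Type*} [MeasurableSpace α] {μ : Measure α}
    {U V : Set α} {φ : α → ℝ} (hU : 0 < μ.real U) (hV : 0 < μ.real V)
    (hφU : IntegrableOn φ U μ) (hφV : IntegrableOn φ V μ) :
    ⨍ x in U, (φ x - ⨍ y in V, φ y ∂μ) ∂μ =
      (∫ x in U, ∫ y in V, (φ x - φ y) ∂μ ∂μ) / (μ.real U * μ.real V) := by
  have hUfin : μ U ≠ ∞ := (ENNReal.toReal_pos_iff.1 hU).2.ne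
  have hVfin : μ V ≠ ∞ := (ENNReal.toReal_pos_iff.1 hV).2.ne
  have hinner : ∀ x, ∫ y in V, (φ x - φ y) ∂μ = μ.real V * φ x - ∫ y in V, φ y ∂μ := fun x => by
    rw [integral_sub (integrableOn_const hVfin (C := φ x)) hφV, setIntegral_const, smul_eq_mul]
  rw [integral_congr_ae (ae_of_all _ hinner), integral_sub (hφU.const_mul _)
    (integrableOn_const hUfin), integral_const_mul, setIntegral_const, smul_eq_mul,
    setAverage_eq, integral_sub hφU (integrableOn_const hUfin), setIntegral_const, smul_eq_mul,
    setAverage_eq, smul_eq_mul, smul_eq_mul]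
  field_simp

section

variable {E F : Type*} [NormedAddCommGroup E] [NormedSpace ℝ E]
  [NormedAddCommGroup F] [NormedSpace ℝ F] [CompleteSpace F]

theorem enorm_sub_le_enorm_mul_lintegral_fderiv_lineMap {φ : E → F} {x y : E}
    (hφ : ∀ z ∈ segment ℝ x y, DifferentiableAt ℝ φ z) :
    ‖φ y - φ x‖ₑ ≤ ‖y - x‖ₑ * ∫⁻ t in Icc (0 : ℝ) 1, ‖fderiv ℝ φ (lineMap x y t)‖ₑ := by
  have hderiv : ∀ t ∈ Icc (0 : ℝ) 1,
      HasDerivAt (φ ∘ lineMap x y) (fderiv ℝ φ (lineMap x y t) (y - x)) t := fun t ht =>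
    (hφ _ (lineMap_mem_segment ℝ x y ht)).hasFDerivAt.comp_hasDerivAt t hasDerivAt_lineMap
  calc ‖φ y - φ x‖ₑ = ‖(φ ∘ lineMap x y) 1 - (φ ∘ lineMap x y) 0‖ₑ := by simp
    _ ≤ ∫⁻ t in Icc (0 : ℝ) 1, ‖deriv (φ ∘ lineMap x y) t‖ₑ :=
      enorm_sub_le_lintegral_enorm_deriv zero_le_one fun t ht => (hderiv t ht).differentiableAt
    _ ≤ ∫⁻ t in Icc (0 : ℝ) 1, ‖y - x‖ₑ * ‖fderiv ℝ φ (lineMap x y t)‖ₑ := by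
      refine setLIntegral_mono' measurableSet_Icc fun t ht => ?_
      rw [(hderiv t ht).deriv, mul_comm]
      exact (fderiv ℝ φ _).le_opENorm _
    _ = _ := lintegral_const_mul' _ _ enorm_ne_top

variable [MeasurableSpace E] [BorelSpace E] [FiniteDimensional ℝ E] (μ : Measure E)
  [μ.IsAddHaarMeasure]

theorem measureReal_le_diam_pow_mul_of_subset {s O : Set E} (hO : Bornology.IsBounded O)
    (hs : s ⊆ O) : μ.real s ≤ diam O ^ finrank ℝ E * μ.real (closedBall 0 1) := by
  rcases s.eq_empty_or_nonempty with rfl | ⟨x, hx⟩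
  · rw [measureReal_empty]
    positivity
  · exact (measureReal_mono (hs.trans fun z hz => dist_le_diam_of_mem hO hz (hs hx))
      measure_closedBall_lt_top.ne).trans_eq (Measure.addHaar_real_closedBall' μ x diam_nonneg)

theorem lintegral_comp_lineMap {g : E → ℝ≥0∞} (hg : Measurable g) (x : E) {t : ℝ}
    (ht : t ≠ 0) :
    ∫⁻ y, g (lineMap x y t) ∂μ = ENNReal.ofReal |(t ^ finrank ℝ E)⁻¹| * ∫⁻ y, g y ∂μ := by
  have hg' : Measurable fun z => g ((1 - t) • x + z) := hg.comp (measurable_const_add _)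
  simp_rw [lineMap_apply_module]
  rw [← lintegral_map hg' (measurable_const_smul t), Measure.map_addHaar_smul μ ht,
    lintegral_smul_measure, lintegral_add_left_eq_self g, smul_eq_mul]

theorem lintegral_comp_lineMap_le {g : E → ℝ≥0∞} (hg : Measurable g) (x : E) {t : ℝ}
    (ht : 1 / 2 ≤ t) :
    ∫⁻ y, g (lineMap x y t) ∂μ ≤ 2 ^ finrank ℝ E * ∫⁻ y, g y ∂μ := by
  have ht₀ : 0 < t := by linarith
  rw [lintegral_comp_lineMap μ hg x ht₀.ne']
  gcongr
  rw [abs_of_pos (by positivity), ← inv_pow, ← ENNReal.ofReal_ofNat,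
    ← ENNReal.ofReal_pow zero_le_two]
  gcongr
  rw [inv_le_comm₀ ht₀ two_pos]
  linarith

theorem setLIntegral_setLIntegral_comp_lineMap_le {g : E → ℝ≥0∞} (hg : Measurable g)
    (U V : Set E) (t : ℝ) :
    ∫⁻ x in U, ∫⁻ y in V, g (lineMap x y t) ∂μ ∂μ ≤
      2 ^ finrank ℝ E * (μ U + μ V) * ∫⁻ z, g z ∂μ := by
  rcases le_total (1 / 2) t with ht | ht
  · calc ∫⁻ x in U, ∫⁻ y in V, g (lineMap x y t) ∂μ ∂μ
        ≤ ∫⁻ _ in U, 2 ^ finrank ℝ E * ∫⁻ z, g z ∂μ ∂μ := lintegral_mono fun x =>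
          (setLIntegral_le_lintegral _ _).trans (lintegral_comp_lineMap_le μ hg x ht)
      _ ≤ _ := by rw [setLIntegral_const, mul_right_comm]; gcongr; exact le_self_add
  · have ht' : 1 / 2 ≤ 1 - t := by linarith
    calc ∫⁻ x in U, ∫⁻ y in V, g (lineMap x y t) ∂μ ∂μ
        = ∫⁻ y in V, ∫⁻ x in U, g (lineMap y x (1 - t)) ∂μ ∂μ := by
          simp_rw [lineMap_apply_one_sub]
          exact lintegral_lintegral_swap (hg.comp (by fun_prop)).aemeasurable
      _ ≤ ∫⁻ _ in V, 2 ^ finrank ℝ E * ∫⁻ z, g z ∂μ ∂μ := lintegral_mono fun y =>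
          (setLIntegral_le_lintegral _ _).trans (lintegral_comp_lineMap_le μ hg y ht')
      _ ≤ _ := by rw [setLIntegral_const, mul_right_comm]; gcongr; exact le_add_self

theorem setLIntegral_setLIntegral_lintegral_segment_le {g : E → ℝ≥0∞} (hg : Measurable g)
    (U V : Set E) :
    ∫⁻ x in U, ∫⁻ y in V, (∫⁻ t in Icc (0 : ℝ) 1, g (lineMap x y t)) ∂μ ∂μ ≤
      2 ^ finrank ℝ E * (μ U + μ V) * ∫⁻ z, g z ∂μ := by
  have hmeas : Measurable fun p : (E × E) × ℝ => g (lineMap p.1.1 p.1.2 p.2) :=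
    hg.comp (by fun_prop)
  have hmeas_x : ∀ x, Measurable fun p : E × ℝ => g (lineMap x p.1 p.2) := fun x =>
    hmeas.comp (f := fun p : E × ℝ => ((x, p.1), p.2)) (by fun_prop)
  have hmeas_xt : Measurable fun p : E × ℝ => ∫⁻ y in V, g (lineMap p.1 y p.2) ∂μ :=
    Measurable.lintegral_prod_right' (f := fun q : (E × ℝ) × E => g (lineMap q.1.1 q.2 q.1.2))
      (hmeas.comp (f := fun q : (E × ℝ) × E => ((q.1.1, q.2), q.1.2)) (by fun_prop))
  calc ∫⁻ x in U, ∫⁻ y in V, (∫⁻ t in Icc (0 : ℝ) 1, g (lineMap x y t)) ∂μ ∂μ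
      = ∫⁻ x in U, (∫⁻ t in Icc (0 : ℝ) 1, ∫⁻ y in V, g (lineMap x y t) ∂μ) ∂μ :=
        lintegral_congr fun x => lintegral_lintegral_swap (hmeas_x x).aemeasurable
    _ = ∫⁻ t in Icc (0 : ℝ) 1, ∫⁻ x in U, ∫⁻ y in V, g (lineMap x y t) ∂μ ∂μ :=
        lintegral_lintegral_swap hmeas_xt.aemeasurable
    _ ≤ ∫⁻ _ in Icc (0 : ℝ) 1, 2 ^ finrank ℝ E * (μ U + μ V) * ∫⁻ z, g z ∂μ :=
        lintegral_mono fun t => setLIntegral_setLIntegral_comp_lineMap_le μ hg U V t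
    _ = _ := by simp

theorem enorm_setIntegral_setIntegral_sub_le {U V O : Set E} {φ : E → F} {D : ℝ}
    (hU : MeasurableSet U) (hV : MeasurableSet V) (hO : MeasurableSet O)
    (hseg : ∀ x ∈ U, ∀ y ∈ V, segment ℝ x y ⊆ O) (hφ : ∀ z ∈ O, DifferentiableAt ℝ φ z)
    (hD : ∀ x ∈ U, ∀ y ∈ V, dist x y ≤ D) :
    ‖∫ x in U, ∫ y in V, (φ x - φ y) ∂μ ∂μ‖ₑ ≤
      ENNReal.ofReal D * 2 ^ finrank ℝ E * (μ U + μ V) * ∫⁻ z in O, ‖fderiv ℝ φ z‖ₑ ∂μ := by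
  set G := O.indicator fun z => ‖fderiv ℝ φ z‖ₑ
  have hG : Measurable G := (measurable_fderiv ℝ φ).enorm.indicator hO
  have hpt : ∀ x ∈ U, ∀ y ∈ V,
      ‖φ x - φ y‖ₑ ≤ ENNReal.ofReal D * ∫⁻ t in Icc (0 : ℝ) 1, G (lineMap x y t) := by
    intro x hx y hy
    have hxy := hseg x hx y hy
    have hGseg : ∫⁻ t in Icc (0 : ℝ) 1, ‖fderiv ℝ φ (lineMap x y t)‖ₑ =
        ∫⁻ t in Icc (0 : ℝ) 1, G (lineMap x y t) :=
      setLIntegral_congr_fun measurableSet_Icc fun t ht =>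
        (indicator_of_mem (hxy (lineMap_mem_segment ℝ x y ht)) fun z => ‖fderiv ℝ φ z‖ₑ).symm
    rw [enorm_sub_rev, ← hGseg]
    refine (enorm_sub_le_enorm_mul_lintegral_fderiv_lineMap fun z hz => hφ z (hxy hz)).trans ?_
    gcongr
    rw [← edist_eq_enorm_sub, edist_dist, dist_comm]
    exact ENNReal.ofReal_le_ofReal (hD x hx y hy)
  calc ‖∫ x in U, ∫ y in V, (φ x - φ y) ∂μ ∂μ‖ₑ
      ≤ ∫⁻ x in U, ∫⁻ y in V, ‖φ x - φ y‖ₑ ∂μ ∂μ :=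
        (enorm_integral_le_lintegral_enorm _).trans
          (lintegral_mono fun x => enorm_integral_le_lintegral_enorm _)
    _ ≤ ∫⁻ x in U, ∫⁻ y in V,
          ENNReal.ofReal D * (∫⁻ t in Icc (0 : ℝ) 1, G (lineMap x y t)) ∂μ ∂μ :=
        setLIntegral_mono' hU fun x hx => setLIntegral_mono' hV fun y hy => hpt x hx y hy
    _ = ENNReal.ofReal D *
          ∫⁻ x in U, ∫⁻ y in V, (∫⁻ t in Icc (0 : ℝ) 1, G (lineMap x y t)) ∂μ ∂μ := by
        simp_rw [lintegral_const_mul' _ _ ENNReal.ofReal_ne_top]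
    _ ≤ ENNReal.ofReal D * (2 ^ finrank ℝ E * (μ U + μ V) * ∫⁻ z, G z ∂μ) := by
        gcongr
        exact setLIntegral_setLIntegral_lintegral_segment_le μ hG U V
    _ = _ := by rw [lintegral_indicator hO]; ring

theorem norm_setIntegral_setIntegral_sub_le {U V O : Set E} {φ : E → F} {D : ℝ}
    (hU : MeasurableSet U) (hV : MeasurableSet V) (hO : MeasurableSet O)
    (hUfin : μ U ≠ ∞) (hVfin : μ V ≠ ∞)
    (hseg : ∀ x ∈ U, ∀ y ∈ V, segment ℝ x y ⊆ O) (hφ : ∀ z ∈ O, DifferentiableAt ℝ φ z)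
    (hD₀ : 0 ≤ D) (hD : ∀ x ∈ U, ∀ y ∈ V, dist x y ≤ D)
    (hφ' : IntegrableOn (fun z => ‖fderiv ℝ φ z‖) O μ) :
    ‖∫ x in U, ∫ y in V, (φ x - φ y) ∂μ ∂μ‖ ≤
      D * 2 ^ finrank ℝ E * (μ.real U + μ.real V) * ∫ z in O, ‖fderiv ℝ φ z‖ ∂μ := by
  have hfin : ∫⁻ z in O, ‖fderiv ℝ φ z‖ₑ ∂μ ≠ ∞ := by
    simpa only [hasFiniteIntegral_iff_enorm, enorm_norm] using hφ'.2.ne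
  calc ‖∫ x in U, ∫ y in V, (φ x - φ y) ∂μ ∂μ‖
      = ‖∫ x in U, ∫ y in V, (φ x - φ y) ∂μ ∂μ‖ₑ.toReal := (toReal_enorm _).symm
    _ ≤ (ENNReal.ofReal D * 2 ^ finrank ℝ E * (μ U + μ V) *
          ∫⁻ z in O, ‖fderiv ℝ φ z‖ₑ ∂μ).toReal :=
        ENNReal.toReal_mono (by finiteness)
          (enorm_setIntegral_setIntegral_sub_le μ hU hV hO hseg hφ hD)
    _ = _ := by
        rw [integral_eq_lintegral_of_nonneg_ae (ae_of_all _ fun _ => norm_nonneg _) hφ'.1]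
        simp [ENNReal.toReal_add hUfin hVfin, hD₀, measureReal_def, ofReal_norm]

end

/-- comparison of averages on two neighbouring sets. If every segment joining a
point of `U` to a point of `V` stays in `O`, then there is `C` depending only on `d` with
`|⨍_U φ − ⨍_V φ| ≤ C diam(O)^{d+1} / (|U||V|) ∫_O |∇φ|` for every `φ ∈ W^{1,1}(O)`
(formalised as a differentiable function on `O` whose gradient is integrable). -/
theorem stmt3 (d : ℕ) :
    ∃ C > 0, ∀ U V O : Set (EuclideanSpace ℝ (Fin d)),
      IsOpen U → IsOpen V → IsOpen O → Bornology.IsBounded O →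
      0 < (volume U).toReal → 0 < (volume V).toReal →
      (∀ x ∈ U, ∀ y ∈ V, segment ℝ x y ⊆ O) →
      ∀ φ : EuclideanSpace ℝ (Fin d) → ℝ,
        (∀ x ∈ O, DifferentiableAt ℝ φ x) →
        IntegrableOn φ O volume →
        IntegrableOn (fun x => ‖gradient φ x‖) O volume →
        |((volume U).toReal)⁻¹ * ∫ x in U, φ x -
            ((volume V).toReal)⁻¹ * ∫ x in V, φ x| ≤
          C * diam O ^ (d + 1) / ((volume U).toReal * (volume V).toReal) *
            ∫ x in O, ‖gradient φ x‖ := by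
  set K := (volume : Measure (EuclideanSpace ℝ (Fin d))).real (closedBall 0 1)
  have hK : 0 < K := ENNReal.toReal_pos (measure_closedBall_pos _ _ one_pos).ne'
    measure_closedBall_lt_top.ne
  refine ⟨2 ^ (d + 1) * K, by positivity, ?_⟩
  intro U V O hU hV hO hObd haU haV hseg φ hφ hφO hgrad
  obtain ⟨x₀, hx₀⟩ := nonempty_of_measure_ne_zero (ENNReal.toReal_pos_iff.1 haU).1.ne'
  obtain ⟨y₀, hy₀⟩ := nonempty_of_measure_ne_zero (ENNReal.toReal_pos_iff.1 haV).1.ne'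
  have hUO : U ⊆ O := fun x hx => hseg x hx y₀ hy₀ (left_mem_segment ℝ x y₀)
  have hVO : V ⊆ O := fun y hy => hseg x₀ hx₀ y hy (right_mem_segment ℝ x₀ y)
  have hvol : ∀ s ⊆ O, volume.real s ≤ diam O ^ d * K := fun s hs => by
    simpa only [finrank_euclideanSpace_fin] using
      measureReal_le_diam_pow_mul_of_subset volume hObd hs
  simp_rw [norm_gradient_eq_norm_fderiv] at hgrad ⊢
  have hbound := norm_setIntegral_setIntegral_sub_le volume hU.measurableSet hV.measurableSet
    hO.measurableSet (ENNReal.toReal_pos_iff.1 haU).2.ne (ENNReal.toReal_pos_iff.1 haV).2.ne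
    hseg hφ diam_nonneg (fun x hx y hy => dist_le_diam_of_mem hObd (hUO hx) (hVO hy)) hgrad
  -- The binder of `∫ x in U, φ x - c` extends over the subtraction.
  have havg := setAverage_sub_setAverage_eq_div haU haV (hφO.mono_set hUO) (hφO.mono_set hVO)
  simp only [setAverage_eq, measureReal_def, smul_eq_mul, finrank_euclideanSpace_fin] at havg hbound
  rw [havg, abs_div, abs_of_pos (mul_pos haU haV), div_mul_eq_mul_div]
  gcongr
  calc _ ≤ diam O * 2 ^ d * ((volume U).toReal + (volume V).toReal) *
        ∫ z in O, ‖fderiv ℝ φ z‖ := hbound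
    _ ≤ diam O * 2 ^ d * (diam O ^ d * K + diam O ^ d * K) * ∫ z in O, ‖fderiv ℝ φ z‖ := by
        gcongr
        exacts [hvol U hUO, hvol V hVO]
    _ = _ := by ring
end
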